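/- Let −∞ < t₁ < t₂ < ∞ and let Q : [t₁,t₂] → M₃(ℝ) be continuous with Q(t) ∈ 𝒬 for every t. Then there exist exactly two continuous maps n⁺, n⁻ : [t₁,t₂] → 𝕊² with Q(t) = P(n⁺(t)) = P(n⁻(t)) for all t, and they satisfy n⁻ = −n⁺. Equivalently: given either of the two unit vectors n̄ ∈ 𝕊² with Q(t₁) = P(n̄), there exists a unique continuous map n : [t₁,t₂] → 𝕊² with n(t₁) = n̄ and Q(t) = P(n(t)) for all t ∈ [t₁,t₂]. -/

import Mathlib

/-!
On the unit sphere `P(m) = P(n)` holds exactly when `m = ±n`, and an open hemisphere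
`{⟪·, e⟫ > 0}` is disjoint from its antipode; hence `P` is a quotient covering map of the
sphere onto `𝒬` with deck group `{±1}`. A compact interval is simply connected, so `Q` has a
unique continuous lift through this covering once its value at `t₁` is fixed, and the two
admissible initial values `±n̄` give the lifts `n` and `-n`.
-/

/-- `P(n) = s (n⊗n − (1/3) Id)`. -/
noncomputable def Pmat (s : ℝ) (n : Fin 3 → ℝ) : Matrix (Fin 3) (Fin 3) ℝ :=
  s • (Matrix.vecMulVec n n - (1 / 3 : ℝ) • (1 : Matrix (Fin 3) (Fin 3) ℝ))

open Matrix Metric Topology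

local notation "E3" => EuclideanSpace ℝ (Fin 3)

theorem Matrix.vecMulVec_self_eq_iff {ι R : Type*} [Fintype ι] [CommRing R] [NoZeroDivisors R]
    {v w : ι → R} (hv : v ⬝ᵥ v = 1) :
    vecMulVec w w = vecMulVec v v ↔ w = v ∨ w = -v := by
  refine ⟨fun h => ?_, by rintro (rfl | rfl) <;> simp⟩
  set c := w ⬝ᵥ v
  have hvw : v = c • w := by simpa [vecMulVec_mulVec, hv] using congrArg (· *ᵥ v) h.symm
  have hc : c * c = 1 := by
    rw [← hv]
    nth_rw 2 [hvw]
    rw [dotProduct_smul, smul_eq_mul, dotProduct_comm]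
  have hwv : w = c • v := by rw [hvw, smul_smul, hc, one_smul]
  rcases mul_self_eq_one_iff.mp hc with h1 | h1
  · exact .inl (by simpa [h1] using hwv)
  · exact .inr (by simpa [h1] using hwv)

theorem Real.eq_one_or_eq_neg_one_of_mem_sphere (g : sphere (0 : ℝ) 1) :
    (g : ℝ) = 1 ∨ (g : ℝ) = -1 := by
  have hg := g.2
  rwa [mem_sphere_zero_iff_norm, Real.norm_eq_abs, abs_eq zero_le_one] at hg

theorem mem_orbit_unitSphere_iff {E : Type*} [NormedAddCommGroup E] [NormedSpace ℝ E] {r : ℝ}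
    {m n : sphere (0 : E) r} : m ∈ MulAction.orbit (sphere (0 : ℝ) 1) n ↔ m = n ∨ m = -n := by
  rw [MulAction.mem_orbit_iff]
  constructor
  · rintro ⟨g, rfl⟩
    rcases Real.eq_one_or_eq_neg_one_of_mem_sphere g with h | h
    · exact .inl (Subtype.ext <| (congrArg (· • (n : E)) h).trans (one_smul _ _))
    · exact .inr (Subtype.ext <| (congrArg (· • (n : E)) h).trans (neg_one_smul _ _))
  · rintro (rfl | rfl)
    · exact ⟨1, one_smul _ _⟩
    · exact ⟨-1, Subtype.ext (neg_one_smul ℝ (n : E))⟩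

theorem EuclideanSpace.ofLp_dotProduct_self {ι : Type*} [Fintype ι] (m : EuclideanSpace ℝ ι) :
    m.ofLp ⬝ᵥ m.ofLp = ‖m‖ ^ 2 := by
  rw [← real_inner_self_eq_norm_sq, EuclideanSpace.inner_eq_star_dotProduct]
  simp

theorem continuous_Pmat (s : ℝ) : Continuous (Pmat s) := by
  unfold Pmat; fun_prop

theorem Pmat_neg (s : ℝ) (m : E3) : Pmat s (fun i => (-m) i) = Pmat s (fun i => m i) := by
  change Pmat s (-m.ofLp) = Pmat s m.ofLp
  simp [Pmat]

theorem Pmat_eq_Pmat_iff {s : ℝ} (hs : s ≠ 0) {m n : E3} (hm : ‖m‖ = 1) :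
    Pmat s (fun i => n i) = Pmat s (fun i => m i) ↔ n = m ∨ n = -m := by
  have hm' : m.ofLp ⬝ᵥ m.ofLp = 1 := by simp [EuclideanSpace.ofLp_dotProduct_self, hm]
  rw [Pmat, Pmat, (smul_right_injective _ hs).eq_iff, sub_left_inj, vecMulVec_self_eq_iff hm',
    ← (WithLp.ofLp_injective 2).eq_iff, ← (WithLp.ofLp_injective 2).eq_iff]
  rfl

noncomputable def PmatSphere (s : ℝ) (n : sphere (0 : E3) 1) : Matrix (Fin 3) (Fin 3) ℝ :=
  Pmat s (fun i => (n : E3) i)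

theorem PmatSphere_eq_iff {s : ℝ} (hs : s ≠ 0) {m n : sphere (0 : E3) 1} :
    PmatSphere s m = PmatSphere s n ↔ m ∈ MulAction.orbit (sphere (0 : ℝ) 1) n := by
  rw [PmatSphere, PmatSphere, Pmat_eq_Pmat_iff hs (norm_eq_of_mem_sphere n),
    mem_orbit_unitSphere_iff, Subtype.ext_iff, Subtype.ext_iff, coe_neg_sphere]

theorem isQuotientCoveringMap_rangeFactorization_PmatSphere {s : ℝ} (hs : s ≠ 0) :
    IsQuotientCoveringMap (Set.rangeFactorization (PmatSphere s)) (sphere (0 : ℝ) 1) := by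
  have hcont : Continuous (Set.rangeFactorization (PmatSphere s)) :=
    ((continuous_Pmat s).comp (by fun_prop)).subtype_mk _
  refine
    { toIsQuotientMap := hcont.isClosedMap.isQuotientMap hcont Set.rangeFactorization_surjective
      apply_eq_iff_mem_orbit := by simp [Subtype.ext_iff, PmatSphere_eq_iff hs]
      disjoint := fun e => ⟨{x | 0 < inner ℝ (x : E3) e}, ?_, fun g ⟨_, ⟨x, hx, rfl⟩, hgx⟩ => ?_⟩ }
  · exact (isOpen_lt continuous_const (by fun_prop)).mem_nhds (by simp)
  · have hx' : 0 < inner ℝ (x : E3) e := hx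
    have hgx' : 0 < (g : ℝ) * inner ℝ (x : E3) e := by rwa [← real_inner_smul_left]
    refine Subtype.ext ((Real.eq_one_or_eq_neg_one_of_mem_sphere g).resolve_right fun h => ?_)
    rw [h] at hgx'
    linarith

theorem existsUnique_continuous_Pmat_lift {A : Type*} [TopologicalSpace A]
    [SimplyConnectedSpace A] [LocallyPathConnectedSpace A] {s : ℝ} (hs : s ≠ 0)
    {Q : A → Matrix (Fin 3) (Fin 3) ℝ} (hQc : Continuous Q)
    (hQval : ∀ a, ∃ m : E3, ‖m‖ = 1 ∧ Q a = Pmat s (fun i => m i))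
    {a₀ : A} {nbar : E3} (hnbar : ‖nbar‖ = 1) (h₀ : Q a₀ = Pmat s (fun i => nbar i)) :
    ∃! n : A → E3, Continuous n ∧ n a₀ = nbar ∧
      ∀ a, ‖n a‖ = 1 ∧ Q a = Pmat s (fun i => n a i) := by
  have hQ : ∀ a, Q a ∈ Set.range (PmatSphere s) := fun a => by
    obtain ⟨m, hm, hQm⟩ := hQval a
    exact ⟨⟨m, mem_sphere_zero_iff_norm.mpr hm⟩, hQm.symm⟩
  let f : C(A, Set.range (PmatSphere s)) := ⟨fun a => ⟨Q a, hQ a⟩, hQc.subtype_mk _⟩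
  have cov := (isQuotientCoveringMap_rangeFactorization_PmatSphere hs).isCoveringMap
  obtain ⟨F, ⟨hF₀, hF⟩, hF_unique⟩ := cov.existsUnique_continuousMap_lifts f a₀
    ⟨nbar, mem_sphere_zero_iff_norm.mpr hnbar⟩ (Subtype.ext h₀.symm)
  refine ⟨fun a => F a, ⟨by fun_prop, congrArg Subtype.val hF₀, fun a => ⟨?_, ?_⟩⟩, ?_⟩
  · exact norm_eq_of_mem_sphere (F a)
  · exact (congrArg Subtype.val (congrFun hF a)).symm
  · rintro n ⟨hnc, hn₀, hn⟩
    let F' : C(A, sphere (0 : E3) 1) :=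
      ⟨fun a => ⟨n a, mem_sphere_zero_iff_norm.mpr (hn a).1⟩, hnc.subtype_mk _⟩
    have hF' : F' = F := hF_unique F' ⟨Subtype.ext hn₀, funext fun a => Subtype.ext (hn a).2.symm⟩
    exact funext fun a => congrArg Subtype.val (DFunLike.congr_fun hF' a)

theorem stmt3 (s : ℝ) (hs : s ≠ 0)
    (t₁ t₂ : ℝ) (ht : t₁ < t₂)
    (Q : Set.Icc t₁ t₂ → Matrix (Fin 3) (Fin 3) ℝ) (hQc : Continuous Q)
    (hQval : ∀ t, ∃ m : EuclideanSpace ℝ (Fin 3), ‖m‖ = 1 ∧ Q t = Pmat s (fun i => m i)) :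
    (∃ np : Set.Icc t₁ t₂ → EuclideanSpace ℝ (Fin 3),
      Continuous np ∧ (∀ t, ‖np t‖ = 1 ∧ Q t = Pmat s (fun i => np t i)) ∧
      (fun t => -np t) ≠ np ∧
      (∀ m : Set.Icc t₁ t₂ → EuclideanSpace ℝ (Fin 3), Continuous m →
        (∀ t, ‖m t‖ = 1 ∧ Q t = Pmat s (fun i => m t i)) →
        m = np ∨ m = fun t => -np t)) ∧
    (∀ nbar : EuclideanSpace ℝ (Fin 3), ‖nbar‖ = 1 →
      Q ⟨t₁, Set.left_mem_Icc.mpr ht.le⟩ = Pmat s (fun i => nbar i) →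
      ∃! n : Set.Icc t₁ t₂ → EuclideanSpace ℝ (Fin 3),
        Continuous n ∧ n ⟨t₁, Set.left_mem_Icc.mpr ht.le⟩ = nbar ∧
        ∀ t, ‖n t‖ = 1 ∧ Q t = Pmat s (fun i => n t i)) := by
  have := (convex_Icc t₁ t₂).contractibleSpace (Set.nonempty_Icc.mpr ht.le)
  have := (convex_Icc t₁ t₂).locallyPathConnectedSpace
  set t₀ : Set.Icc t₁ t₂ := ⟨t₁, Set.left_mem_Icc.mpr ht.le⟩
  have lift := fun nbar hnbar h₀ =>
    existsUnique_continuous_Pmat_lift (a₀ := t₀) (nbar := nbar) hs hQc hQval hnbar h₀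
  refine ⟨?_, lift⟩
  obtain ⟨nbar, hnbar, h₀⟩ := hQval t₀
  obtain ⟨np, ⟨hnpc, -, hnp⟩, hnp_unique⟩ := lift nbar hnbar h₀
  refine ⟨np, hnpc, hnp, fun h => ?_, fun m hmc hm => ?_⟩
  · exact ne_neg_of_mem_unit_sphere ℝ (⟨np t₀, mem_sphere_zero_iff_norm.mpr (hnp t₀).1⟩ :
      sphere (0 : E3) 1) (Subtype.ext (congrFun h t₀).symm)
  · have hneg : ∀ t, ‖-m t‖ = 1 ∧ Q t = Pmat s (fun i => (-m t) i) := fun t =>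
      ⟨by rw [norm_neg, (hm t).1], by rw [Pmat_neg, (hm t).2]⟩
    rcases (Pmat_eq_Pmat_iff hs hnbar).mp ((hm t₀).2.symm.trans h₀) with hm₀ | hm₀
    · exact .inl (hnp_unique m ⟨hmc, hm₀, hm⟩)
    · have hnp_eq : (fun t => -m t) = np := hnp_unique _ ⟨hmc.neg, by simp [hm₀], hneg⟩
      exact .inr (by simp [← hnp_eq])
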